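/- arXiv:1906.00312 — 3 statements merged into one kernel-verified Lean document; each statement's English description precedes it below -/
import Mathlib

section
/- For any non-empty set Π of odd prime numbers, the function δ_Π : μ_∞^* → {±1} defined by δ_Π(ζ) = -1 if the order of ζ is divisible only by primes in Π, and δ_Π(ζ) = 1 otherwise, is a circular distribution: it is Galois-equivariant and satisfies ∏_{ζ^a = ε} δ_Π(ζ) = δ_Π(ε) for all a ∈ ℕ and all nontrivial roots of unity ε. -/
open scoped Classical

/-- A fixed algebraic closure of `ℚ`. -/
notation "Qc" => AlgebraicClosure ℚ

noncomputable instance : DecidableEq Qc := Classical.decEq _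

/-- A circular distribution in the sense of Coleman: a Galois-equivariant function on the
set `μ_∞^*` of nontrivial roots of unity, with values in `Q^{c,×}`, satisfying
`∏_{ζ^a = ε} f(ζ) = f(ε)`.  (The function is given as a total function on `Qc`; all
conditions concern only nontrivial roots of unity.) -/
structure CircularDist where
  toFun : Qc → Qc
  equivariant : ∀ (σ : Qc ≃ₐ[ℚ] Qc) (ζ : Qc) (n : ℕ), 0 < n → ζ ^ n = 1 → ζ ≠ 1 →
    toFun (σ ζ) = σ (toFun ζ)
  nonzero : ∀ (ζ : Qc) (n : ℕ), 0 < n → ζ ^ n = 1 → ζ ≠ 1 → toFun ζ ≠ 0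
  distrib : ∀ (a : ℕ) (ε : Qc) (n : ℕ), 0 < a → 0 < n → ε ^ n = 1 → ε ≠ 1 →
    ∏ ζ ∈ (Polynomial.nthRoots a ε).toFinset, toFun ζ = toFun ε


/-- The function `δ_Π` attached to a set `P` of odd primes: it takes the value `-1` at
roots of unity whose order is divisible only by primes belonging to `P`, and `1`
otherwise. -/
noncomputable def deltaFun (P : Set ℕ) : Qc → Qc := fun ζ =>
  if ∀ q : ℕ, q.Prime → q ∣ orderOf ζ → q ∈ P then -1 else 1

/-! `δ_Π` takes the value `-1` exactly at the `Π`-elements, those whose order is a `Π`-number,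
and depends only on the order, which Galois automorphisms preserve. Every `a`-th root of `ε`
has order divisible by that of `ε`, so if `ε` is not a `Π`-element no root is, and both sides of
the distribution relation are `1`. If `ε` is a `Π`-element, it has an `a`-th root `ζ₀` that is
one too (take roots prime by prime: for `q ∈ Π` any root will do, for `q ∉ Π` the `q`-th power
map is bijective on `⟨ε⟩`). The involution `ζ ↦ ζ₀² / ζ` of the other `a`-th roots of `ε`
preserves `Π`-elements, and a `Π`-element it fixes would give `-1 = ζ / ζ₀` as a `Π`-element,
impossible as `2 ∉ Π`. Hence the `Π`-elements among the roots are odd in number. -/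

def AllPrimeDivisorsIn (P : Set ℕ) (n : ℕ) : Prop := ∀ q : ℕ, q.Prime → q ∣ n → q ∈ P

namespace AllPrimeDivisorsIn

variable {P : Set ℕ}

lemma of_dvd {m n : ℕ} (h : AllPrimeDivisorsIn P n) (hmn : m ∣ n) : AllPrimeDivisorsIn P m :=
  fun q hq hqm => h q hq (hqm.trans hmn)

lemma mul {m n : ℕ} (hm : AllPrimeDivisorsIn P m) (hn : AllPrimeDivisorsIn P n) :
    AllPrimeDivisorsIn P (m * n) :=
  fun q hq hqmn => (hq.dvd_mul.mp hqmn).elim (hm q hq) (hn q hq)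

lemma of_prime_mem {q : ℕ} (hq : q.Prime) (hqP : q ∈ P) : AllPrimeDivisorsIn P q :=
  fun _ hr hrq => (Nat.prime_dvd_prime_iff_eq hr hq).mp hrq ▸ hqP

lemma two_mem (h : AllPrimeDivisorsIn P 0) : 2 ∈ P := h 2 Nat.prime_two (dvd_zero 2)

lemma orderOf_mul {M : Type*} [CommMonoid M] {x y : M} (hx : AllPrimeDivisorsIn P (orderOf x))
    (hy : AllPrimeDivisorsIn P (orderOf y)) : AllPrimeDivisorsIn P (orderOf (x * y)) :=
  (hx.mul hy).of_dvd (Commute.all x y).orderOf_mul_dvd_mul_orderOf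

lemma orderOf_div {G : Type*} [DivisionCommMonoid G] {x y : G}
    (hx : AllPrimeDivisorsIn P (orderOf x)) (hy : AllPrimeDivisorsIn P (orderOf y)) :
    AllPrimeDivisorsIn P (orderOf (x / y)) := by
  have hinv : orderOf y⁻¹ = orderOf y := by simp [orderOf_eq_orderOf_iff, inv_pow]
  rw [div_eq_mul_inv]
  exact hx.orderOf_mul (hinv ▸ hy)

end AllPrimeDivisorsIn

section Field

variable {K : Type*} [Field K] {P : Set ℕ}

lemma exists_pow_eq_of_prime_of_allPrimeDivisorsIn [IsAlgClosed K] {q : ℕ} (hq : q.Prime)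
    {ε : K} (hε : AllPrimeDivisorsIn P (orderOf ε)) :
    ∃ ζ : K, ζ ^ q = ε ∧ AllPrimeDivisorsIn P (orderOf ζ) := by
  by_cases hqP : q ∈ P
  · obtain ⟨ζ, hζ⟩ := IsAlgClosed.exists_pow_nat_eq ε hq.pos
    have hζ1 : ζ ^ (q * orderOf ε) = 1 := by rw [pow_mul, hζ, pow_orderOf_eq_one]
    exact ⟨ζ, hζ, ((AllPrimeDivisorsIn.of_prime_mem hq hqP).mul hε).of_dvd
      (orderOf_dvd_of_pow_eq_one hζ1)⟩
  · have hco : q.Coprime (orderOf ε) := (hq.coprime_iff_not_dvd).mpr fun h => hqP (hε q hq h)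
    obtain ⟨m, hm⟩ := exists_pow_eq_self_of_coprime hco
    exact ⟨ε ^ m, by rw [← pow_mul, mul_comm, pow_mul, hm], hε.of_dvd (orderOf_pow_dvd m)⟩

lemma exists_pow_eq_of_allPrimeDivisorsIn [IsAlgClosed K] {a : ℕ} (ha : 0 < a)
    {ε : K} (hε : AllPrimeDivisorsIn P (orderOf ε)) :
    ∃ ζ : K, ζ ^ a = ε ∧ AllPrimeDivisorsIn P (orderOf ζ) := by
  induction a using induction_on_primes generalizing ε with
  | zero => exact absurd ha (lt_irrefl 0)
  | one => exact ⟨ε, pow_one ε, hε⟩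
  | prime_mul q b hq ih =>
    obtain ⟨η, hη, hηP⟩ := ih (Nat.pos_of_mul_pos_left ha) hε
    obtain ⟨ζ, hζ, hζP⟩ := exists_pow_eq_of_prime_of_allPrimeDivisorsIn hq hηP
    exact ⟨ζ, by rw [pow_mul, hζ, hη], hζP⟩

lemma AllPrimeDivisorsIn.ne_zero (h2 : 2 ∉ P) {x : K} (hx : AllPrimeDivisorsIn P (orderOf x)) :
    x ≠ 0 := by
  rintro rfl
  exact h2 (orderOf_zero K ▸ hx).two_mem

lemma AllPrimeDivisorsIn.orderOf_div_iff {x y : K} (hx : AllPrimeDivisorsIn P (orderOf x))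
    (hx0 : x ≠ 0) : AllPrimeDivisorsIn P (orderOf (x / y)) ↔ AllPrimeDivisorsIn P (orderOf y) :=
  ⟨fun h => by simpa only [div_div_cancel₀ hx0] using hx.orderOf_div h, hx.orderOf_div⟩

lemma not_allPrimeDivisorsIn_orderOf_neg_one (hK : ringChar K ≠ 2) (h2 : 2 ∉ P) :
    ¬ AllPrimeDivisorsIn P (orderOf (-1 : K)) := by
  rw [orderOf_neg_one, if_neg hK]
  exact fun h => h2 (h 2 Nat.prime_two dvd_rfl)

lemma AllPrimeDivisorsIn.eq_of_sq_eq_sq (hK : ringChar K ≠ 2) (h2 : 2 ∉ P) {x y : K}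
    (hx : AllPrimeDivisorsIn P (orderOf x)) (hy : AllPrimeDivisorsIn P (orderOf y))
    (hxy : x ^ 2 = y ^ 2) : x = y := by
  have hy0 : y ≠ 0 := hy.ne_zero h2
  rcases sq_eq_one_iff.mp (by rw [div_pow, hxy, div_self (pow_ne_zero 2 hy0)] : (x / y) ^ 2 = 1)
    with h | h
  · exact (div_eq_one_iff_eq hy0).mp h
  · exact absurd (h ▸ hx.orderOf_div hy) (not_allPrimeDivisorsIn_orderOf_neg_one hK h2)

end Field

section DeltaFun

variable {P : Set ℕ}

lemma deltaFun_of_allPrimeDivisorsIn {ζ : Qc} (h : AllPrimeDivisorsIn P (orderOf ζ)) :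
    deltaFun P ζ = -1 := if_pos h

lemma deltaFun_of_not_allPrimeDivisorsIn {ζ : Qc} (h : ¬ AllPrimeDivisorsIn P (orderOf ζ)) :
    deltaFun P ζ = 1 := if_neg h

lemma deltaFun_ne_zero (ζ : Qc) : deltaFun P ζ ≠ 0 := by
  unfold deltaFun
  split_ifs <;> norm_num

lemma deltaFun_algEquiv_apply (σ : Qc ≃ₐ[ℚ] Qc) (ζ : Qc) :
    deltaFun P (σ ζ) = σ (deltaFun P ζ) := by
  have horder : orderOf (σ ζ) = orderOf ζ := MulEquiv.orderOf_eq (σ : Qc ≃* Qc) ζ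
  unfold deltaFun
  rw [horder]
  split_ifs <;> simp

lemma prod_deltaFun_nthRoots_of_allPrimeDivisorsIn (h2 : 2 ∉ P) {a : ℕ} (ha : 0 < a) {ε : Qc}
    (hε : AllPrimeDivisorsIn P (orderOf ε)) :
    ∏ ζ ∈ (Polynomial.nthRoots a ε).toFinset, deltaFun P ζ = -1 := by
  have hchar : ringChar Qc ≠ 2 := by rw [ringChar.eq_zero]; norm_num
  have hε0 : ε ≠ 0 := hε.ne_zero h2
  have hmem : ∀ ζ, ζ ∈ (Polynomial.nthRoots a ε).toFinset ↔ ζ ^ a = ε := fun ζ => by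
    rw [Multiset.mem_toFinset, Polynomial.mem_nthRoots ha]
  have hne0 : ∀ {ζ : Qc}, ζ ^ a = ε → ζ ≠ 0 := fun hζ => ne_zero_pow ha.ne' (hζ ▸ hε0)
  obtain ⟨ζ₀, hζ₀, hζ₀P⟩ := exists_pow_eq_of_allPrimeDivisorsIn ha hε
  have hsq0 : ζ₀ ^ 2 ≠ 0 := pow_ne_zero 2 (hne0 hζ₀)
  have hreflect (ζ : Qc) :=
    (hζ₀P.of_dvd (orderOf_pow_dvd 2)).orderOf_div_iff (y := ζ) hsq0
  rw [← Finset.mul_prod_erase _ _ ((hmem ζ₀).mpr hζ₀), deltaFun_of_allPrimeDivisorsIn hζ₀P]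
  suffices ∏ ζ ∈ (Polynomial.nthRoots a ε).toFinset.erase ζ₀, deltaFun P ζ = 1 by
    rw [this, mul_one]
  refine Finset.prod_involution (fun ζ _ => ζ₀ ^ 2 / ζ) ?_ ?_ ?_ ?_
  · intro ζ _
    by_cases hζP : AllPrimeDivisorsIn P (orderOf ζ)
    · rw [deltaFun_of_allPrimeDivisorsIn hζP,
        deltaFun_of_allPrimeDivisorsIn ((hreflect ζ).mpr hζP), neg_one_mul, neg_neg]
    · rw [deltaFun_of_not_allPrimeDivisorsIn hζP,
        deltaFun_of_not_allPrimeDivisorsIn (mt (hreflect ζ).mp hζP), one_mul]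
  · intro ζ hζ hδ hfix
    have hζP : AllPrimeDivisorsIn P (orderOf ζ) :=
      not_not.mp (mt deltaFun_of_not_allPrimeDivisorsIn hδ)
    have hζ0 := hne0 ((hmem ζ).mp (Finset.mem_of_mem_erase hζ))
    have hsq : ζ ^ 2 = ζ₀ ^ 2 := by
      rw [div_eq_iff hζ0] at hfix
      rw [hfix, sq]
    exact Finset.ne_of_mem_erase hζ (hζP.eq_of_sq_eq_sq hchar h2 hζ₀P hsq)
  · intro ζ hζ
    have hζa := (hmem ζ).mp (Finset.mem_of_mem_erase hζ)
    refine Finset.mem_erase.mpr ⟨fun h => Finset.ne_of_mem_erase hζ ?_, (hmem _).mpr ?_⟩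
    · rw [div_eq_iff (hne0 hζa), sq] at h
      exact (mul_left_cancel₀ (hne0 hζ₀) h).symm
    · rw [div_pow, ← pow_mul, mul_comm, pow_mul, hζ₀, hζa, sq, mul_div_cancel_right₀ _ hε0]
  · intro ζ _
    exact div_div_cancel₀ hsq0

lemma prod_deltaFun_nthRoots_of_not_allPrimeDivisorsIn {a : ℕ} (ha : 0 < a) {ε : Qc}
    (hε : ¬ AllPrimeDivisorsIn P (orderOf ε)) :
    ∏ ζ ∈ (Polynomial.nthRoots a ε).toFinset, deltaFun P ζ = 1 := by
  refine Finset.prod_eq_one fun ζ hζ => deltaFun_of_not_allPrimeDivisorsIn fun hζP => hε ?_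
  rw [Multiset.mem_toFinset, Polynomial.mem_nthRoots ha] at hζ
  exact hζP.of_dvd (hζ ▸ orderOf_pow_dvd a)

end DeltaFun

theorem statement3_general (P : Set ℕ)
    (hP : ∀ q ∈ P, Nat.Prime q ∧ Odd q) :
    ∃ f : CircularDist, f.toFun = deltaFun P := by
  have h2 : 2 ∉ P := fun h => absurd (hP 2 h).2 (by decide)
  refine ⟨⟨deltaFun P, fun σ ζ _ _ _ _ => deltaFun_algEquiv_apply σ ζ,
    fun ζ _ _ _ _ => deltaFun_ne_zero ζ, fun a ε _ ha _ _ _ => ?_⟩, rfl⟩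
  by_cases hε : AllPrimeDivisorsIn P (orderOf ε)
  · rw [prod_deltaFun_nthRoots_of_allPrimeDivisorsIn h2 ha hε, deltaFun_of_allPrimeDivisorsIn hε]
  · rw [prod_deltaFun_nthRoots_of_not_allPrimeDivisorsIn ha hε,
      deltaFun_of_not_allPrimeDivisorsIn hε]

/-- for any non-empty set `P` of odd primes, the function `δ_Π` is a
circular distribution. -/
theorem statement3 (P : Set ℕ) (hne : P.Nonempty)
    (hP : ∀ q ∈ P, Nat.Prime q ∧ Odd q) :
    ∃ f : CircularDist, f.toFun = deltaFun P :=
  statement3_general P hP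
end

section
/- Let n ≥ 2 and let m be a multiple of n with m = nℓ for a prime ℓ. Consider the surjective ring homomorphism π : Z[G_m] → Z[G_n] induced by restriction of Galois groups, where G_k = Gal(Q(μ_k)/Q). If ℓ divides n, or if ℓ is odd, or if n is even, then π maps the annihilator ideal Ann_{Z[G_m]}(μ_m) (for the natural action of G_m on μ_m via a fixed generator ζ_m) onto Ann_{Z[G_n]}(μ_n). If ℓ = 2 and n is odd, then π(Ann_{Z[G_m]}(μ_m)) is a subgroup of Ann_{Z[G_n]}(μ_n) of index 2. -/
open MonoidAlgebra

/-- Evaluation of the group ring `ℤ[G_m]` (with `G_m = (ℤ/m)ˣ = Gal(ℚ(μ_m)/ℚ)`) on the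
standard generator `ζ_m` of `μ_m ≅ ℤ/m`: the additive map sending `Σ a_g·g` to
`Σ a_g·(g·1)` in `ℤ/m`. -/
noncomputable def theta (m : ℕ) : MonoidAlgebra ℤ (ZMod m)ˣ →+ ZMod m :=
  Finsupp.liftAddHom (fun g : (ZMod m)ˣ => zmultiplesHom (ZMod m) (g : ZMod m)) |>.comp
    MonoidAlgebra.coeffAddEquiv.toAddMonoidHom

/-- The annihilator `Ann_{ℤ[G_m]}(μ_m)`: the kernel of the evaluation map `θ_m`,
i.e. `{r ∈ ℤ[G_m] : ζ_m^r = 1}`. -/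
noncomputable def annMu (m : ℕ) : AddSubgroup (MonoidAlgebra ℤ (ZMod m)ˣ) :=
  (theta m).ker

/-- The transition map `π^m_n : ℤ[G_m] → ℤ[G_n]` induced by the natural surjection
`G_m → G_n` for `n ∣ m`. -/
noncomputable def transMap {n m : ℕ} (h : n ∣ m) :
    MonoidAlgebra ℤ (ZMod m)ˣ →+* MonoidAlgebra ℤ (ZMod n)ˣ :=
  MonoidAlgebra.mapDomainRingHom ℤ (ZMod.unitsMap h)

/-! Let `ρ : ℤ/nℓ → ℤ/n` be the reduction map. The square `ρ ∘ θ_{nℓ} = θ_n ∘ π` commutes and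
both `π` and `θ_{nℓ}` are surjective, so the index of `π(Ann μ_{nℓ})` in `Ann μ_n` equals the index
of `θ_{nℓ}(ker π)` in `ker ρ`, a group of prime order `ℓ`. Now `θ_{nℓ}(ker π)` contains `g - 1` for
every `g` in the kernel of `G_{nℓ} → G_n`, so it is nonzero, hence all of `ker ρ`, unless
`G_{nℓ} → G_n` is injective. By counting, that happens iff `φ(nℓ) = φ(n)`, i.e. iff `ℓ = 2` and
`n` is odd; then `π` is injective, `θ_{nℓ}(ker π) = 0` and the index is `ℓ = 2`. -/

namespace AddSubgroup

variable {A B : Type*} [AddGroup A] [AddGroup B]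

theorem relIndex_map_of_surjective {f : A →+ B} (hf : Function.Surjective f)
    (H : AddSubgroup A) (K : AddSubgroup B) :
    (H.map f).relIndex K = (H ⊔ f.ker).relIndex (K.comap f) := by
  rw [← comap_map_eq, relIndex_comap, map_comap_eq_self_of_surjective hf]

theorem le_of_card_prime {H K : AddSubgroup A} (hK : (Nat.card K).Prime) (hHK : H ≤ K)
    (hH : H ≠ ⊥) : K ≤ H := by
  have : Fact (Nat.card K).Prime := ⟨hK⟩
  rcases (H.addSubgroupOf K).eq_bot_or_eq_top_of_prime_card with h | h
  · exact absurd (disjoint_self.mp ((addSubgroupOf_eq_bot.mp h).mono_right hHK)) hH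
  · exact addSubgroupOf_eq_top.mp h

end AddSubgroup

namespace AddMonoidHom

variable {A B C D : Type*} [AddGroup A] [AddGroup B] [AddGroup C] [AddGroup D]
  {π : A →+ B} {θ : A →+ C} {θ' : B →+ D} {ρ : C →+ D}

theorem map_ker_le_ker_of_comp_eq (hcomm : ρ.comp θ = θ'.comp π) :
    θ.ker.map π ≤ θ'.ker := by
  rintro _ ⟨x, hx, rfl⟩
  rw [SetLike.mem_coe, AddMonoidHom.mem_ker] at hx
  rw [AddMonoidHom.mem_ker, ← AddMonoidHom.comp_apply, ← hcomm, AddMonoidHom.comp_apply, hx,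
    map_zero]

theorem relIndex_map_ker_eq_of_comp_eq (hcomm : ρ.comp θ = θ'.comp π)
    (hπ : Function.Surjective π) (hθ : Function.Surjective θ) :
    (θ.ker.map π).relIndex θ'.ker = (π.ker.map θ).relIndex ρ.ker := by
  rw [AddSubgroup.relIndex_map_of_surjective hπ, AddSubgroup.relIndex_map_of_surjective hθ,
    AddMonoidHom.comap_ker, AddMonoidHom.comap_ker, ← hcomm, sup_comm]

end AddMonoidHom

open Nat in
theorem Nat.totient_mul_prime_eq_iff {n ℓ : ℕ} (hn : n ≠ 0) (hℓ : ℓ.Prime) :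
    φ (n * ℓ) = φ n ↔ ℓ = 2 ∧ Odd n := by
  have hφ : 0 < φ n := totient_pos.mpr (Nat.pos_of_ne_zero hn)
  rw [mul_comm]
  by_cases hdvd : ℓ ∣ n
  · rw [totient_mul_of_prime_of_dvd hℓ hdvd]
    constructor
    · intro h; nlinarith [hℓ.two_le]
    · rintro ⟨rfl, hodd⟩; exact absurd hdvd hodd.not_two_dvd_nat
  · rw [totient_mul_of_prime_of_not_dvd hℓ hdvd, mul_eq_right₀ hφ.ne']
    constructor
    · intro h
      have : ℓ = 2 := by have := hℓ.two_le; omega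
      subst this
      exact ⟨rfl, Nat.odd_iff.mpr (Nat.two_dvd_ne_zero.mp hdvd)⟩
    · rintro ⟨rfl, -⟩; rfl

namespace ZMod

open Nat in
theorem unitsMap_injective_iff {n m : ℕ} [NeZero m] (h : n ∣ m) :
    Function.Injective (unitsMap h) ↔ φ m = φ n := by
  have : NeZero n := ⟨by rintro rfl; exact NeZero.ne m (zero_dvd_iff.mp h)⟩
  rw [← card_units_eq_totient, ← card_units_eq_totient, ← Nat.card_eq_fintype_card,
    ← Nat.card_eq_fintype_card]
  exact ⟨fun hinj => Nat.card_eq_of_bijective _ ⟨hinj, unitsMap_surjective h⟩,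
    fun hcard => ((Nat.bijective_iff_surjective_and_card _).mpr
      ⟨unitsMap_surjective h, hcard⟩).injective⟩

theorem card_ker_castHom_mul {n m : ℕ} (h : n ∣ m) :
    Nat.card (castHom h (ZMod n)).toAddMonoidHom.ker * n = m := by
  conv_rhs => rw [← Nat.card_zmod m, ← (castHom h (ZMod n)).toAddMonoidHom.ker.card_mul_index,
    AddSubgroup.index_ker, AddMonoidHom.range_eq_top.mpr (castHom_surjective h),
    AddSubgroup.card_top, Nat.card_zmod]

theorem card_ker_castHom_dvd_mul_right {n : ℕ} [NeZero n] (k : ℕ) :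
    Nat.card (castHom (dvd_mul_right n k) (ZMod n)).toAddMonoidHom.ker = k :=
  Nat.eq_of_mul_eq_mul_left (Nat.pos_of_neZero n)
    ((mul_comm _ _).trans (card_ker_castHom_mul (dvd_mul_right n k)))

end ZMod

open MonoidAlgebra

theorem theta_single (m : ℕ) (g : (ZMod m)ˣ) (a : ℤ) :
    theta m (single g a) = a • (g : ZMod m) := by
  simp [theta]

theorem theta_surjective (m : ℕ) : Function.Surjective (theta m) := by
  intro x
  obtain ⟨a, rfl⟩ := ZMod.intCast_surjective x
  exact ⟨single 1 a, by rw [theta_single, Units.val_one, zsmul_one]⟩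

theorem transMap_single {n m : ℕ} (h : n ∣ m) (g : (ZMod m)ˣ) (a : ℤ) :
    transMap h (single g a) = single (ZMod.unitsMap h g) a :=
  mapDomain_single

theorem transMap_surjective {n m : ℕ} [NeZero m] (h : n ∣ m) :
    Function.Surjective (transMap h) := by
  intro y
  induction y using MonoidAlgebra.induction_linear with
  | zero => exact ⟨0, map_zero _⟩
  | add y z hy hz =>
    obtain ⟨x, rfl⟩ := hy
    obtain ⟨x', rfl⟩ := hz
    exact ⟨x + x', map_add _ x x'⟩
  | single g a =>
    obtain ⟨g', rfl⟩ := ZMod.unitsMap_surjective h g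
    exact ⟨single g' a, transMap_single h g' a⟩

theorem castHom_comp_theta {n m : ℕ} (h : n ∣ m) :
    (ZMod.castHom h (ZMod n)).toAddMonoidHom.comp (theta m) =
      (theta n).comp (transMap h).toAddMonoidHom := by
  ext g
  simp only [AddMonoidHom.comp_apply, RingHom.toAddMonoidHom_eq_coe, AddMonoidHom.coe_coe,
    singleAddHom_apply, theta_single, transMap_single, one_smul, ZMod.unitsMap_val,
    ZMod.castHom_apply]

theorem map_ker_transMap_eq_bot_iff {n m : ℕ} (h : n ∣ m) :
    (transMap h).toAddMonoidHom.ker.map (theta m) = ⊥ ↔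
      Function.Injective (ZMod.unitsMap h) := by
  refine ⟨fun hbot => ?_, fun hinj => ?_⟩
  · rw [injective_iff_map_eq_one]
    intro g hg
    have hker : single g 1 - single 1 1 ∈ (transMap h).toAddMonoidHom.ker := by
      rw [AddMonoidHom.mem_ker, RingHom.toAddMonoidHom_eq_coe, AddMonoidHom.coe_coe, map_sub,
        transMap_single, transMap_single, hg, map_one, sub_self]
    have hzero := (AddSubgroup.eq_bot_iff_forall _).mp hbot _ (AddSubgroup.mem_map_of_mem _ hker)
    rw [map_sub, theta_single, theta_single, one_smul, one_smul, Units.val_one, sub_eq_zero]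
      at hzero
    exact Units.val_eq_one.mp hzero
  · rw [(AddMonoidHom.ker_eq_bot_iff _).mpr (mapDomain_injective hinj), AddSubgroup.map_bot]

/-- for `n ≥ 2` and `m = nℓ` with `ℓ` prime, the transition map
`π : ℤ[G_m] → ℤ[G_n]` maps `Ann_{ℤ[G_m]}(μ_m)` onto `Ann_{ℤ[G_n]}(μ_n)` whenever
`ℓ ∣ n`, or `ℓ` is odd, or `n` is even; if `ℓ = 2` and `n` is odd, the image is a
subgroup of `Ann_{ℤ[G_n]}(μ_n)` of index `2`. -/
theorem statement7 (n ℓ : ℕ) (hn : 2 ≤ n) (hℓ : ℓ.Prime) :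
    ((ℓ ∣ n ∨ ℓ ≠ 2 ∨ Even n) →
      AddSubgroup.map ((transMap (dvd_mul_right n ℓ)).toAddMonoidHom)
        (annMu (n * ℓ)) = annMu n) ∧
    ((ℓ = 2 ∧ Odd n) →
      AddSubgroup.map ((transMap (dvd_mul_right n ℓ)).toAddMonoidHom)
          (annMu (n * ℓ)) ≤ annMu n ∧
      (AddSubgroup.map ((transMap (dvd_mul_right n ℓ)).toAddMonoidHom)
          (annMu (n * ℓ))).relIndex (annMu n) = 2) := by
  have : NeZero n := ⟨by omega⟩
  have : NeZero (n * ℓ) := ⟨mul_ne_zero (by omega) hℓ.ne_zero⟩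
  have hdvd := dvd_mul_right n ℓ
  have hcomm := castHom_comp_theta hdvd
  have hindex := AddMonoidHom.relIndex_map_ker_eq_of_comp_eq hcomm (transMap_surjective hdvd)
    (theta_surjective _)
  have hinj : Function.Injective (ZMod.unitsMap hdvd) ↔ ℓ = 2 ∧ Odd n := by
    rw [ZMod.unitsMap_injective_iff, Nat.totient_mul_prime_eq_iff (by omega) hℓ]
  have hcard := ZMod.card_ker_castHom_dvd_mul_right (n := n) ℓ
  refine ⟨fun hcase => ?_, fun hodd => ⟨AddMonoidHom.map_ker_le_ker_of_comp_eq hcomm, ?_⟩⟩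
  · have hne : (transMap hdvd).toAddMonoidHom.ker.map (theta (n * ℓ)) ≠ ⊥ := by
      rw [Ne, map_ker_transMap_eq_bot_iff, hinj]
      rintro ⟨rfl, hodd⟩
      rcases hcase with h2 | h2 | h2
      · exact hodd.not_two_dvd_nat h2
      · exact h2 rfl
      · exact Nat.not_even_iff_odd.mpr hodd h2
    refine le_antisymm (AddMonoidHom.map_ker_le_ker_of_comp_eq hcomm)
      (AddSubgroup.relIndex_eq_one.mp ?_)
    unfold annMu
    rw [hindex, AddSubgroup.relIndex_eq_one]
    exact AddSubgroup.le_of_card_prime (hcard.symm ▸ hℓ)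
      (AddMonoidHom.map_ker_le_ker_of_comp_eq hcomm.symm) hne
  · unfold annMu
    rw [hindex, (map_ker_transMap_eq_bot_iff hdvd).mpr (hinj.mpr hodd),
      AddSubgroup.relIndex_bot_left, hcard, hodd.1]
end

section
/- Let p and q be distinct odd primes and suppose that the multiplicative order of q modulo p does not divide q - 1. Let L be the fixed field of σ_q (inverse Frobenius at q) inside the cyclotomic Z_p-tower ∪_a Q(μ_{p^a}), with v_L the valuation at the unique prime of L above p. Then there is no integer v with the property that for all sufficiently large t one has p^t · w_t = (q-1)·v_L(p)·(p^t - 1)/(p-1) + v for some integers w_t. Equivalently: writing (q-1)v_L(p) = r + s(p-1) with 0 < r < p-1 and s ≥ 0, no integer v satisfies v ≡ -(r·(p^t-1)/(p-1) - s) mod p^t for all large t. -/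
/-- arithmetic core of Lemma 2.9(ii): let `p` be a prime and `r, s`
integers with `0 < r < p - 1` and `0 ≤ s`.  Then there is no integer `v` such that, for
all sufficiently large `t`, either `-v ≡ r·(p^t-1)/(p-1) - s (mod p^t)` or
`v ≡ p^t - r·(p^t-1)/(p-1) + s (mod p^t)`, where `(p^t-1)/(p-1) = Σ_{i<t} p^i`. -/
theorem statement15 (p : ℕ) (hp : p.Prime) (r s : ℤ)
    (hr0 : 0 < r) (hr1 : r < (p : ℤ) - 1) (hs : 0 ≤ s) :
    ¬ ∃ v : ℤ, ∃ T : ℕ, ∀ t : ℕ, T ≤ t →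
      (Int.ModEq ((p : ℤ) ^ t) (-v) (r * (∑ i ∈ Finset.range t, (p : ℤ) ^ i) - s) ∨
       Int.ModEq ((p : ℤ) ^ t) v
         ((p : ℤ) ^ t - r * (∑ i ∈ Finset.range t, (p : ℤ) ^ i) + s)) := by
  rintro ⟨v, T, hT⟩
  set t := max T ((v - s).natAbs + 1) with ht
  have h := hT t (le_max_left _ _)
  set S : ℤ := ∑ i ∈ Finset.range t, (p : ℤ) ^ i with hS
  have hp2 : (2 : ℤ) ≤ (p : ℤ) := by exact_mod_cast hp.two_le
  have htS : (t : ℤ) ≤ S := by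
    calc (t : ℤ) = ∑ _i ∈ Finset.range t, (1 : ℤ) := by simp
    _ ≤ S := Finset.sum_le_sum fun i _ => one_le_pow₀ (by linarith)
  have hgeom : ((p : ℤ) - 1) * S = (p : ℤ) ^ t - 1 := by
    rw [hS, mul_comm]; exact geom_sum_mul _ _
  have htn : ((v - s).natAbs : ℤ) + 1 ≤ (t : ℤ) := by
    exact_mod_cast Nat.le_of_lt_succ (Nat.lt_succ_of_le (le_max_right T _))
  have habs1 : v - s ≤ ((v - s).natAbs : ℤ) := Int.le_natAbs
  have habs2 : -(v - s) ≤ ((v - s).natAbs : ℤ) := by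
    rw [← Int.natAbs_neg]; exact Int.le_natAbs
  have hS0 : (0 : ℤ) ≤ S := by linarith
  have hrS : S ≤ r * S := le_mul_of_one_le_left hS0 (by linarith)
  have hrS2 : S ≤ ((p : ℤ) - 1 - r) * S := le_mul_of_one_le_left hS0 (by linarith)
  have hdvd : (p : ℤ) ^ t ∣ v + r * S - s := by
    rcases h with h | h
    · have := h.dvd
      have heq : r * S - s - -v = v + r * S - s := by ring
      rwa [heq] at this
    · have h2 := h.dvd
      have := dvd_sub (dvd_refl ((p : ℤ) ^ t)) h2
      have heq : (p : ℤ) ^ t - ((p : ℤ) ^ t - r * S + s - v) = v + r * S - s := by ring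
      rwa [heq] at this
  have hpos : 0 < v + r * S - s := by nlinarith
  have hlt : v + r * S - s < (p : ℤ) ^ t := by nlinarith
  have := Int.le_of_dvd hpos hdvd
  linarith
end
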